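/- arXiv:1810.00239 — 3 statements merged into one kernel-verified Lean document; each statement's English description precedes it below -/
import Mathlib

section
/- For every v, w ∈ V, the operators L_v and L_w on the Clifford algebra Cl(Q) anticommute: L_v ∘ L_w + L_w ∘ L_v = 0 (in particular L_v ∘ L_v = 0), so that v ↦ L_v induces an action of the exterior (Grassmann) algebra Λ(V) on Cl(Q). -/
open CliffordAlgebra

/-!
On an element `a` of parity `i`, `L_v a = ½ (v a + (-1)^i a v)` has parity `i + 1`, so
`L_v L_w a + L_w L_v a = ¼ ((vw + wv) a - a (vw + wv))`. Since `vw + wv = polar Q v w` is a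
scalar, this vanishes; `L_v² = 0` is the case `v = w`, as `2` is invertible.
-/

theorem neg_one_pow_zmod_two_val_add_one {A : Type*} [Ring A] (i : ZMod 2) :
    (-1 : A) ^ (i + 1).val = -(-1) ^ i.val := by
  obtain rfl | rfl : i = 0 ∨ i = 1 := by revert i; decide
  · show (-1 : A) ^ 1 = -(-1) ^ 0
    simp
  · show (-1 : A) ^ 0 = -(-1) ^ 1
    simp

/-- The left side expands to `(xy + yx) a - a (xy + yx)`: the terms carrying `s` cancel because
`s² = 1`. -/
theorem mul_add_sign_mul_anticomm {A : Type*} [Ring A] {x y a s : A}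
    (hs : s = 1 ∨ s = -1) (h : Commute (x * y + y * x) a) :
    x * (y * a + s * (a * y)) + -s * ((y * a + s * (a * y)) * x) +
      (y * (x * a + s * (a * x)) + -s * ((x * a + s * (a * x)) * y)) = 0 := by
  rcases hs with rfl | rfl <;> linear_combination (norm := noncomm_ring) h.eq

namespace CliffordAlgebra

variable {R : Type*} [CommRing R] {V : Type*} [AddCommGroup V] [Module R V]
  {Q : QuadraticForm R V}

theorem commute_ι_mul_ι_add_swap (v w : V) (a : CliffordAlgebra Q) :
    Commute (ι Q v * ι Q w + ι Q w * ι Q v) a := by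
  rw [ι_mul_ι_add_swap]
  exact Algebra.commutes _ a

theorem ι_mul_add_mul_ι_mem_evenOdd {i : ZMod 2} {a : CliffordAlgebra Q}
    (ha : a ∈ evenOdd Q i) (v : V) (s : CliffordAlgebra Q) (hs : s = 1 ∨ s = -1) :
    ι Q v * a + s * (a * ι Q v) ∈ evenOdd Q (i + 1) := by
  have hl : ι Q v * a ∈ evenOdd Q (i + 1) := by
    simpa [add_comm] using SetLike.mul_mem_graded (ι_mem_evenOdd_one Q v) ha
  have hr : a * ι Q v ∈ evenOdd Q (i + 1) := SetLike.mul_mem_graded ha (ι_mem_evenOdd_one Q v)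
  rcases hs with rfl | rfl
  · simpa using add_mem hl hr
  · simpa [← sub_eq_add_neg] using sub_mem hl hr

variable [Invertible (2 : R)] {L : V → Module.End R (CliffordAlgebra Q)}

theorem anticomm_apply_eq_zero_of_mem_evenOdd
    (hL : ∀ (v : V) (i : ZMod 2) (a : CliffordAlgebra Q), a ∈ evenOdd Q i →
      L v a = ⅟(2 : R) • (ι Q v * a + (-1 : CliffordAlgebra Q) ^ i.val * (a * ι Q v)))
    (v w : V) {i : ZMod 2} {a : CliffordAlgebra Q} (ha : a ∈ evenOdd Q i) :
    L v (L w a) + L w (L v a) = 0 := by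
  set s : CliffordAlgebra Q := (-1) ^ i.val
  have hs : s = 1 ∨ s = -1 := neg_one_pow_eq_or _ _
  have hL' : ∀ x y : V, L x (L y a) =
      ⅟(2 : R) • ⅟(2 : R) • (ι Q x * (ι Q y * a + s * (a * ι Q y)) +
        -s * ((ι Q y * a + s * (a * ι Q y)) * ι Q x)) := fun x y => by
    rw [hL y i a ha, map_smul, hL x (i + 1) _ (ι_mul_add_mul_ι_mem_evenOdd ha y s hs),
      neg_one_pow_zmod_two_val_add_one]
  rw [hL', hL', ← smul_add, ← smul_add,
    mul_add_sign_mul_anticomm hs (commute_ι_mul_ι_add_swap v w a), smul_zero, smul_zero]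

theorem anticomm_apply_eq_zero
    (hL : ∀ (v : V) (i : ZMod 2) (a : CliffordAlgebra Q), a ∈ evenOdd Q i →
      L v a = ⅟(2 : R) • (ι Q v * a + (-1 : CliffordAlgebra Q) ^ i.val * (a * ι Q v)))
    (v w : V) (a : CliffordAlgebra Q) :
    L v (L w a) + L w (L v a) = 0 := by
  induction a using DirectSum.Decomposition.inductionOn (ℳ := evenOdd Q) with
  | zero => simp
  | add x y hx hy => simpa [add_add_add_comm] using congrArg₂ (· + ·) hx hy
  | homogeneous a => exact anticomm_apply_eq_zero_of_mem_evenOdd hL v w a.2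

end CliffordAlgebra

/-- For every `v, w ∈ V`, the operators `L_v` and `L_w` on the Clifford
algebra `Cl(Q)` anticommute: `L_v ∘ L_w + L_w ∘ L_v = 0` (in particular `L_v ∘ L_v = 0`). -/
theorem clifford_L_anticommute
    {R : Type*} [CommRing R] [Invertible (2 : R)]
    {V : Type*} [AddCommGroup V] [Module R V] (Q : QuadraticForm R V)
    (L : V → Module.End R (CliffordAlgebra Q))
    (hL : ∀ (v : V) (i : ZMod 2) (a : CliffordAlgebra Q), a ∈ evenOdd Q i →
      L v a = ⅟(2 : R) • (ι Q v * a + (-1 : CliffordAlgebra Q) ^ i.val * (a * ι Q v)))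
    (v w : V) :
    L v * L w + L w * L v = 0 ∧ L v * L v = 0 := by
  have hanti : ∀ x y : V, L x * L y + L y * L x = 0 := fun x y =>
    LinearMap.ext (anticomm_apply_eq_zero hL x y)
  refine ⟨hanti v w, ?_⟩
  rw [← invOf_smul_smul (2 : R) (L v * L v), two_smul, hanti v v, smul_zero]
end

section
/- The R-linear map φ : Λ(V) → Cl(Q) defined by φ(x) = ρ(x)(1), where ρ : Λ(V) → End_R(Cl(Q)) is the algebra homomorphism induced by v ↦ L_v (well-defined since the L_v anticommute and square to zero), is an R-linear isomorphism sending 1 to 1; in particular the action ρ of the Grassmann algebra on the Clifford algebra is faithful. -/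
/-!
Over `R ∋ ½`, a homogeneous `a` satisfies `(-1)^|a| a ι(v) = involute(a) ι(v) = ι(v) a - 2 (B_Q v)⌋a`,
with `B_Q` the symmetric bilinear form associated to `Q`. Hence `L_v = ι(v) · _ - (B_Q v)⌋_`, which is
exactly the recursion `changeForm (ι v * x) = ι v * changeForm x - (B_Q v)⌋changeForm x` defining
the Chevalley map `Λ(V) → Cl(Q)`. So `x ↦ ρ(x)(1)` is that map, a linear isomorphism with inverse
`changeForm` along `-B_Q`, and `ρ` is injective because already `x ↦ ρ(x)(1)` is.
-/

namespace CliffordAlgebra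

variable {R : Type*} [CommRing R] {V : Type*} [AddCommGroup V] [Module R V]
  {Q : QuadraticForm R V}

theorem involute_eq_neg_one_pow_mul {i : ZMod 2} {a : CliffordAlgebra Q}
    (ha : a ∈ evenOdd Q i) : involute a = (-1 : CliffordAlgebra Q) ^ i.val * a := by
  obtain rfl | rfl := (by decide : ∀ j : ZMod 2, j = 0 ∨ j = 1) i
  · rw [involute_eq_of_mem_even ha, ZMod.val_zero, pow_zero, one_mul]
  · rw [involute_eq_of_mem_odd ha, ZMod.val_one, pow_one, neg_one_mul]

theorem involute_mul_ι (v : V) (a : CliffordAlgebra Q) :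
    involute a * ι Q v = ι Q v * a - contractLeft (Q.polarBilin v) a := by
  induction a using CliffordAlgebra.left_induction with
  | algebraMap r =>
    rw [AlgHom.commutes, contractLeft_algebraMap, sub_zero, Algebra.commutes]
  | add x y hx hy =>
    rw [map_add, add_mul, hx, hy, map_add, mul_add]
    abel
  | ι_mul x m hx =>
    rw [map_mul, involute_ι, neg_mul, neg_mul, mul_assoc, hx, contractLeft_ι_mul,
      ← mul_assoc, ι_mul_ι_comm, QuadraticMap.polarBilin_apply_apply]
    simp only [mul_sub, sub_mul, ← Algebra.smul_def, mul_assoc]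
    abel

theorem invOf_two_smul_ι_mul_add_involute_mul_ι [Invertible (2 : R)] (v : V)
    (a : CliffordAlgebra Q) :
    ⅟(2 : R) • (ι Q v * a + involute a * ι Q v) =
      ι Q v * a - contractLeft (QuadraticMap.associated Q v) a := by
  have hpolar : Q.polarBilin v = (2 : R) • QuadraticMap.associated Q v := by
    rw [← QuadraticMap.two_nsmul_associated R Q, LinearMap.smul_apply, two_smul, two_smul]
  rw [involute_mul_ι, hpolar, map_smul, LinearMap.smul_apply, ← add_sub_assoc,
    ← two_smul R, ← smul_sub, invOf_smul_smul]

theorem eq_mulLeft_sub_contractLeft [Invertible (2 : R)] (v : V)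
    (f : Module.End R (CliffordAlgebra Q))
    (hf : ∀ (i : ZMod 2) (a : CliffordAlgebra Q), a ∈ evenOdd Q i →
      f a = ⅟(2 : R) • (ι Q v * a + (-1 : CliffordAlgebra Q) ^ i.val * (a * ι Q v))) :
    f = LinearMap.mulLeft R (ι Q v) - contractLeft (QuadraticMap.associated Q v) := by
  refine DirectSum.decompose_lhom_ext (evenOdd Q) fun i => LinearMap.ext fun ⟨a, ha⟩ => ?_
  have hsign : (-1 : CliffordAlgebra Q) ^ i.val * (a * ι Q v) = involute a * ι Q v := by
    rw [involute_eq_neg_one_pow_mul ha, mul_assoc]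
  rw [LinearMap.comp_apply, Submodule.subtype_apply, hf i a ha, hsign,
    invOf_two_smul_ι_mul_add_involute_mul_ι]
  rfl

theorem algHom_apply_one_eq_changeForm {B : LinearMap.BilinForm R V}
    (hB : B.toQuadraticMap = Q - 0)
    (ρ : ExteriorAlgebra R V →ₐ[R] Module.End R (CliffordAlgebra Q))
    (hρ : ∀ v, ρ (ExteriorAlgebra.ι R v) = LinearMap.mulLeft R (ι Q v) - contractLeft (B v))
    (x : ExteriorAlgebra R V) : ρ x 1 = changeForm hB x := by
  induction x using CliffordAlgebra.left_induction with
  | algebraMap r =>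
    rw [AlgHom.commutes, changeForm_algebraMap, Module.algebraMap_end_apply,
      Algebra.algebraMap_eq_smul_one]
  | add x y hx hy => rw [map_add, LinearMap.add_apply, hx, hy, map_add]
  | ι_mul x m hx =>
    rw [map_mul, Module.End.mul_apply, hx, changeForm_ι_mul]
    exact congr($(hρ m) (changeForm hB x))

end CliffordAlgebra

open CliffordAlgebra

/-- The map `φ : Λ(V) → Cl(Q)`, `φ(x) = ρ(x)(1)`, where `ρ` is the algebra
homomorphism `Λ(V) → End_R(Cl(Q))` induced by `v ↦ L_v`, is an `R`-linear isomorphism sending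
`1` to `1`; in particular the action `ρ` of the Grassmann algebra on the Clifford algebra is
faithful. -/
theorem clifford_grassmann_module_iso
    {R : Type*} [CommRing R] [Invertible (2 : R)]
    {V : Type*} [AddCommGroup V] [Module R V] (Q : QuadraticForm R V)
    (L : V →ₗ[R] Module.End R (CliffordAlgebra Q))
    (hL : ∀ (v : V) (i : ZMod 2) (a : CliffordAlgebra Q), a ∈ evenOdd Q i →
      L v a = ⅟(2 : R) • (ι Q v * a + (-1 : CliffordAlgebra Q) ^ i.val * (a * ι Q v)))
    (ρ : ExteriorAlgebra R V →ₐ[R] Module.End R (CliffordAlgebra Q))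
    (hρ : ∀ v : V, ρ (ExteriorAlgebra.ι R v) = L v) :
    (∃ φ : ExteriorAlgebra R V ≃ₗ[R] CliffordAlgebra Q,
        (∀ x : ExteriorAlgebra R V, φ x = ρ x 1) ∧ φ 1 = 1) ∧
    Function.Injective ρ := by
  have hB : (QuadraticMap.associated Q).toQuadraticMap = Q - 0 := by
    rw [QuadraticMap.toQuadraticMap_associated, sub_zero]
  have hφ : ∀ x, ρ x 1 = changeForm hB x :=
    algHom_apply_one_eq_changeForm hB ρ fun v => (hρ v).trans
      (eq_mulLeft_sub_contractLeft v (L v) (hL v))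
  refine ⟨⟨changeFormEquiv hB, fun x => (hφ x).symm, changeForm_one hB⟩, fun x y hxy => ?_⟩
  apply (changeFormEquiv hB).injective
  simpa only [changeFormEquiv_apply, hφ] using congr($hxy 1)
end

section
/- Although φ is not an algebra isomorphism, the exterior and interior products are recovered from the Clifford product by projections: for every ξ ∈ Λ^p(V) and y ∈ Cl^q(Q) one has Π^{p+q}(φ(ξ)·y) = L_ξ(y) and Π^{q−p}(φ(ξ)·y) = D_ξ(y), where · denotes the Clifford product, L_ξ (resp. D_ξ) denotes the image of ξ under the algebra homomorphism Λ(V) → End_R(Cl(Q)) induced by v ↦ L_v (resp. v ↦ D_v). -/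
/-!
On homogeneous elements the defining formulas give `L_v a + D_v a = ι(v) a` and
`L_v a - D_v a = involute(a) ι(v)`; hence `D_v L_w + L_w D_v = ½ polar(v, w)`, and so `L_v`
raises and `D_v` lowers the degree `Cl^j` by one. Since
`φ(v ∧ η) y = L_v(φ(η) y) + D_v(φ(η) y) - D_v(φ(η)) y`, induction on `p` shows that for
`ξ ∈ Λ^p` and `y ∈ Cl^q` the product `φ(ξ) y` lives in degrees `q - p, …, q + p`, and that
its parts of degree `q + p` and `q - p` are `L_ξ y` and `D_ξ y`.
-/

open CliffordAlgebra

/-- The linear map `φ : Λ(V) → Cl(Q)`, `φ(x) = ρL(x)(1)`, bundled as a linear map. -/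
noncomputable def cliffordPhi
    {R : Type*} [CommRing R] {V : Type*} [AddCommGroup V] [Module R V]
    {Q : QuadraticForm R V}
    (ρL : ExteriorAlgebra R V →ₐ[R] Module.End R (CliffordAlgebra Q)) :
    ExteriorAlgebra R V →ₗ[R] CliffordAlgebra Q :=
  (LinearMap.applyₗ (1 : CliffordAlgebra Q)).comp ρL.toLinearMap

/-- The component `Cl^j(Q) := φ(Λ^j(V))` of the Clifford algebra. -/
noncomputable def cliffordComponent
    {R : Type*} [CommRing R] {V : Type*} [AddCommGroup V] [Module R V]
    {Q : QuadraticForm R V}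
    (ρL : ExteriorAlgebra R V →ₐ[R] Module.End R (CliffordAlgebra Q)) (j : ℕ) :
    Submodule R (CliffordAlgebra Q) :=
  Submodule.map (cliffordPhi ρL)
    (LinearMap.range (ExteriorAlgebra.ι R : V →ₗ[R] ExteriorAlgebra R V) ^ j)

section Components

variable {R M ι : Type*} [Semiring R] [AddCommMonoid M] [Module R M] [Preorder ι]
  {C : ι → Submodule R M}

def componentsLE (C : ι → Submodule R M) (k : ι) : Submodule R M := ⨆ i ∈ Set.Iic k, C i

def componentsGE (C : ι → Submodule R M) (k : ι) : Submodule R M := ⨆ i ∈ Set.Ici k, C i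

theorem le_componentsLE {i k : ι} (h : i ≤ k) : C i ≤ componentsLE C k :=
  le_biSup C (Set.mem_Iic.2 h)

theorem le_componentsGE {i k : ι} (h : k ≤ i) : C i ≤ componentsGE C k :=
  le_biSup C (Set.mem_Ici.2 h)

theorem componentsLE_le {S : Submodule R M} {k : ι} (h : ∀ i ≤ k, C i ≤ S) :
    componentsLE C k ≤ S :=
  iSup₂_le h

theorem componentsGE_le {S : Submodule R M} {k : ι} (h : ∀ i ≥ k, C i ≤ S) :
    componentsGE C k ≤ S :=
  iSup₂_le h

theorem componentsLE_mono : Monotone (componentsLE C) := fun _ _ h =>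
  biSup_mono fun _ hi => le_trans (Set.mem_Iic.1 hi) h

theorem componentsGE_anti : Antitone (componentsGE C) := fun _ _ h =>
  biSup_mono fun _ hi => le_trans h (Set.mem_Ici.1 hi)

theorem Submodule.map_biSup_le {N α β : Type*} [AddCommMonoid N] [Module R N]
    {f : M →ₗ[R] N} {C : α → Submodule R M} {C' : β → Submodule R N}
    {s : Set α} {t : Set β}
    (g : α → β) (hg : Set.MapsTo g s t) (hf : ∀ i ∈ s, (C i).map f ≤ C' (g i)) :
    (⨆ i ∈ s, C i).map f ≤ ⨆ j ∈ t, C' j := by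
  simp only [Submodule.map_iSup]
  exact iSup₂_le fun i hi => (hf i hi).trans (le_biSup C' (hg hi))

variable [Add ι] [AddRightMono ι] {f : M →ₗ[R] M} {d : ι}

theorem apply_mem_componentsLE (hf : ∀ i, ∀ y ∈ C i, f y ∈ C (i + d)) {k : ι} {y : M}
    (hy : y ∈ componentsLE C k) : f y ∈ componentsLE C (k + d) :=
  Submodule.map_biSup_le (· + d) (fun _ hi => add_le_add_left hi d)
    (fun i _ => Submodule.map_le_iff_le_comap.2 (hf i)) (Submodule.mem_map_of_mem hy)

theorem apply_mem_componentsGE (hf : ∀ i, ∀ y ∈ C i, f y ∈ C (i + d)) {k : ι} {y : M}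
    (hy : y ∈ componentsGE C k) : f y ∈ componentsGE C (k + d) :=
  Submodule.map_biSup_le (· + d) (fun _ hi => add_le_add_left hi d)
    (fun i _ => Submodule.map_le_iff_le_comap.2 (hf i)) (Submodule.mem_map_of_mem hy)

end Components

section Clifford

variable {R : Type*} [CommRing R] {V : Type*} [AddCommGroup V] [Module R V]
  {Q : QuadraticForm R V} {L D : V →ₗ[R] Module.End R (CliffordAlgebra Q)}
  {ρL ρD : ExteriorAlgebra R V →ₐ[R] Module.End R (CliffordAlgebra Q)}
  (hρL : ∀ v : V, ρL (ExteriorAlgebra.ι R v) = L v)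
  (hρD : ∀ v : V, ρD (ExteriorAlgebra.ι R v) = D v)

local notation "Λ¹" => LinearMap.range (ExteriorAlgebra.ι R : V →ₗ[R] ExteriorAlgebra R V)

theorem CliffordAlgebra.linearMap_ext_evenOdd {f g : CliffordAlgebra Q →ₗ[R] CliffordAlgebra Q}
    (h : ∀ i, ∀ a ∈ evenOdd Q i, f a = g a) : f = g := by
  ext a
  induction a using DirectSum.Decomposition.inductionOn (evenOdd Q) with
  | zero => simp
  | homogeneous m => exact h _ m m.2
  | add a b ha hb => simp [ha, hb]

theorem neg_one_pow_val_mul_eq_involute_mul {i : ZMod 2} {a : CliffordAlgebra Q}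
    (ha : a ∈ evenOdd Q i) (b : CliffordAlgebra Q) :
    (-1 : CliffordAlgebra Q) ^ i.val * (a * b) = involute a * b := by
  obtain rfl | rfl : i = 0 ∨ i = 1 := by fin_cases i <;> [left; right] <;> rfl
  · simp [involute_eq_of_mem_even ha]
  · simp [involute_eq_of_mem_odd ha, ZMod.val_one]

noncomputable def cliffordComponentInt
    (ρL : ExteriorAlgebra R V →ₐ[R] Module.End R (CliffordAlgebra Q)) :
    ℤ → Submodule R (CliffordAlgebra Q)
  | (j : ℕ) => cliffordComponent ρL j
  | Int.negSucc _ => ⊥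

theorem cliffordComponentInt_natCast (j : ℕ) :
    cliffordComponentInt ρL j = cliffordComponent ρL j :=
  rfl

theorem cliffordComponentInt_of_neg {i : ℤ} (hi : i < 0) : cliffordComponentInt ρL i = ⊥ := by
  cases i with
  | ofNat j => exact absurd hi (by simp)
  | negSucc => rfl

theorem cliffordComponent_zero : cliffordComponent ρL 0 = 1 := by
  ext y
  simp [cliffordComponent, cliffordPhi, Submodule.mem_one, Algebra.algebraMap_eq_smul_one]

theorem rhoL_apply_one_mem_cliffordComponentInt {p : ℕ} {ξ : ExteriorAlgebra R V}
    (hξ : ξ ∈ Λ¹ ^ p) : ρL ξ 1 ∈ cliffordComponentInt ρL p :=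
  ⟨ξ, hξ, rfl⟩

theorem rhoL_apply_mem_cliffordComponentInt {p : ℕ} {ξ : ExteriorAlgebra R V}
    (hξ : ξ ∈ Λ¹ ^ p) {i : ℤ} {y : CliffordAlgebra Q}
    (hy : y ∈ cliffordComponentInt ρL i) :
    ρL ξ y ∈ cliffordComponentInt ρL (i + p) := by
  cases i with
  | ofNat j =>
    obtain ⟨η, hη, rfl⟩ := hy
    refine ⟨ξ * η, ?_, by simp [cliffordPhi]⟩
    rw [add_comm, pow_add]
    exact Submodule.mul_mem_mul hξ hη
  | negSucc n =>
    rw [(Submodule.mem_bot R).1 hy, map_zero]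
    exact zero_mem _

include hρL in
theorem L_apply_mem_cliffordComponentInt (v : V) {i : ℤ} {y : CliffordAlgebra Q}
    (hy : y ∈ cliffordComponentInt ρL i) : L v y ∈ cliffordComponentInt ρL (i + 1) := by
  rw [← hρL]
  exact rhoL_apply_mem_cliffordComponentInt (by simp) hy

include hρL in
theorem L_apply_mem_componentsLE {v : V} {k : ℤ} {z : CliffordAlgebra Q}
    (hz : z ∈ componentsLE (cliffordComponentInt ρL) k) :
    L v z ∈ componentsLE (cliffordComponentInt ρL) (k + 1) :=
  apply_mem_componentsLE (fun _ _ => L_apply_mem_cliffordComponentInt hρL v) hz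

include hρL in
theorem L_apply_mem_componentsGE {v : V} {k : ℤ} {z : CliffordAlgebra Q}
    (hz : z ∈ componentsGE (cliffordComponentInt ρL) k) :
    L v z ∈ componentsGE (cliffordComponentInt ρL) (k + 1) :=
  apply_mem_componentsGE (fun _ _ => L_apply_mem_cliffordComponentInt hρL v) hz

include hρL in
theorem cliffordComponent_succ_le {j : ℕ} {S : Submodule R (CliffordAlgebra Q)}
    (h : ∀ w, ∀ b ∈ cliffordComponent ρL j, L w b ∈ S) :
    cliffordComponent ρL (j + 1) ≤ S := by
  rintro _ ⟨ξ, hξ, rfl⟩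
  rw [SetLike.mem_coe, pow_succ'] at hξ
  induction hξ using Submodule.mul_induction_on' with
  | mem_mul_mem _ hm η hη =>
    obtain ⟨w, rfl⟩ := hm
    simpa [cliffordPhi, hρL] using h w _ ⟨η, hη, rfl⟩
  | add _ _ _ _ h₁ h₂ => simpa using add_mem h₁ h₂

variable [Invertible (2 : R)]
  (hL : ∀ (v : V) (i : ZMod 2) (a : CliffordAlgebra Q), a ∈ evenOdd Q i →
      L v a = ⅟(2 : R) • (ι Q v * a + (-1 : CliffordAlgebra Q) ^ i.val * (a * ι Q v)))
  (hD : ∀ (v : V) (i : ZMod 2) (a : CliffordAlgebra Q), a ∈ evenOdd Q i →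
      D v a = ⅟(2 : R) • (ι Q v * a - (-1 : CliffordAlgebra Q) ^ i.val * (a * ι Q v)))

include hL in
theorem L_apply_eq (v : V) (a : CliffordAlgebra Q) :
    L v a = ⅟(2 : R) • (ι Q v * a + involute a * ι Q v) :=
  LinearMap.congr_fun (linearMap_ext_evenOdd (g := ⅟(2 : R) • (LinearMap.mulLeft R (ι Q v) +
      LinearMap.mulRight R (ι Q v) ∘ₗ involute.toLinearMap))
    fun i a ha => by simp [hL v i a ha, neg_one_pow_val_mul_eq_involute_mul ha]) a

include hD in
theorem D_apply_eq (v : V) (a : CliffordAlgebra Q) :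
    D v a = ⅟(2 : R) • (ι Q v * a - involute a * ι Q v) :=
  LinearMap.congr_fun (linearMap_ext_evenOdd (g := ⅟(2 : R) • (LinearMap.mulLeft R (ι Q v) -
      LinearMap.mulRight R (ι Q v) ∘ₗ involute.toLinearMap))
    fun i a ha => by simp [hD v i a ha, neg_one_pow_val_mul_eq_involute_mul ha]) a

include hL hD in
theorem ι_mul_eq_L_add_D (v : V) (a : CliffordAlgebra Q) : ι Q v * a = L v a + D v a := by
  rw [L_apply_eq hL, D_apply_eq hD, ← smul_add, add_add_sub_cancel, ← two_smul R, smul_smul,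
    invOf_mul_self, one_smul]

include hL hD in
theorem L_apply_mul (v : V) (b y : CliffordAlgebra Q) :
    L v b * y = L v (b * y) + D v (b * y) - D v b * y := by
  rw [← ι_mul_eq_L_add_D hL hD, ← mul_assoc, ι_mul_eq_L_add_D hL hD, add_mul,
    add_sub_cancel_right]

include hL hD in
theorem D_L_add_L_D (v w : V) (a : CliffordAlgebra Q) :
    D v (L w a) + L w (D v a) = ⅟(2 : R) • QuadraticMap.polar Q v w • a := by
  set P := QuadraticMap.polar Q v w
  have hleft : P • a = ι Q v * ι Q w * a + ι Q w * ι Q v * a := by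
    rw [← add_mul, ι_mul_ι_add_swap, Algebra.smul_def]
  have hright : P • a = a * ι Q w * ι Q v + a * ι Q v * ι Q w := by
    rw [mul_assoc, mul_assoc, ← mul_add, ι_mul_ι_add_swap, ← Algebra.commutes,
      ← Algebra.smul_def, QuadraticMap.polar_comm]
  calc D v (L w a) + L w (D v a) = (⅟(2 : R) * ⅟(2 : R)) • (P • a + P • a) := by
        nth_rewrite 1 [hleft]
        rw [hright]
        simp only [L_apply_eq hL, D_apply_eq hD, map_smul, map_add, map_sub, map_mul, involute_ι,
          involute_involute, mul_smul_comm, smul_mul_assoc, mul_add, mul_sub, add_mul, sub_mul,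
          neg_mul, mul_neg, mul_assoc]
        module
    _ = ⅟(2 : R) • P • a := by
        rw [← two_smul R (P • a), smul_smul, mul_assoc, invOf_mul_self, mul_one]

include hL hD hρL in
theorem D_apply_mem_cliffordComponentInt (v : V) {i : ℤ} {y : CliffordAlgebra Q}
    (hy : y ∈ cliffordComponentInt ρL i) : D v y ∈ cliffordComponentInt ρL (i - 1) := by
  rcases lt_or_ge i 0 with hi | hi
  · rw [cliffordComponentInt_of_neg hi, Submodule.mem_bot] at hy
    rw [hy, map_zero]
    exact zero_mem _
  lift i to ℕ using hi
  rw [cliffordComponentInt_natCast] at hy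
  induction i generalizing y with
  | zero =>
    rw [cliffordComponent_zero, Submodule.mem_one] at hy
    obtain ⟨r, rfl⟩ := hy
    simp [Algebra.algebraMap_eq_smul_one, D_apply_eq hD]
  | succ j ih =>
    rw [Nat.cast_succ, add_sub_cancel_right]
    refine cliffordComponent_succ_le hρL (S := (cliffordComponentInt ρL j).comap (D v))
      (fun w b hb => ?_) hy
    rw [Submodule.mem_comap, eq_sub_of_add_eq (D_L_add_L_D hL hD v w b)]
    refine sub_mem (Submodule.smul_mem _ _ (Submodule.smul_mem _ _ hb)) ?_
    simpa using L_apply_mem_cliffordComponentInt hρL w (ih hb)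

include hL hD hρL hρD in
theorem rhoD_apply_mem_cliffordComponentInt {p : ℕ} {ξ : ExteriorAlgebra R V}
    (hξ : ξ ∈ Λ¹ ^ p) {i : ℤ} {y : CliffordAlgebra Q}
    (hy : y ∈ cliffordComponentInt ρL i) :
    ρD ξ y ∈ cliffordComponentInt ρL (i - p) := by
  induction hξ using Submodule.pow_induction_on_left' generalizing i y with
  | algebraMap r => simpa using Submodule.smul_mem _ r hy
  | add ξ ξ' n _ _ h h' => simpa using add_mem (h hy) (h' hy)
  | mem_mul _ hm n η _ ih =>
    obtain ⟨w, rfl⟩ := hm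
    simpa [hρD, sub_sub] using D_apply_mem_cliffordComponentInt hρL hL hD w (ih hy)

include hL hD hρL in
theorem D_apply_mem_componentsLE {v : V} {k : ℤ} {z : CliffordAlgebra Q}
    (hz : z ∈ componentsLE (cliffordComponentInt ρL) k) :
    D v z ∈ componentsLE (cliffordComponentInt ρL) (k - 1) :=
  apply_mem_componentsLE (d := -1) (fun _ _ => D_apply_mem_cliffordComponentInt hρL hL hD v) hz

include hL hD hρL in
theorem D_apply_mem_componentsGE {v : V} {k : ℤ} {z : CliffordAlgebra Q}
    (hz : z ∈ componentsGE (cliffordComponentInt ρL) k) :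
    D v z ∈ componentsGE (cliffordComponentInt ρL) (k - 1) :=
  apply_mem_componentsGE (d := -1) (fun _ _ => D_apply_mem_cliffordComponentInt hρL hL hD v) hz

include hρL hL hD in
theorem mul_mem_componentsGE_inf_componentsLE {k : ℤ} {x : CliffordAlgebra Q}
    (hx : x ∈ cliffordComponentInt ρL k) {q : ℤ} {y : CliffordAlgebra Q}
    (hy : y ∈ cliffordComponentInt ρL q) :
    x * y ∈ componentsGE (cliffordComponentInt ρL) (q - k) ⊓
      componentsLE (cliffordComponentInt ρL) (q + k) := by
  -- strong induction via a degree bound `n`: in `L_apply_mul`, `D_w b` has degree `n - 1 ≥ -1`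
  suffices ∀ n : ℕ, ∀ k : ℤ, k ≤ n → ∀ x ∈ cliffordComponentInt ρL k,
      x * y ∈ componentsGE (cliffordComponentInt ρL) (q - k) ⊓
        componentsLE (cliffordComponentInt ρL) (q + k) from
    this k.toNat k (Int.self_le_toNat k) x hx
  intro n
  induction n with
  | zero =>
    intro k hk x hx
    rcases hk.lt_or_eq with hk | rfl
    · rw [cliffordComponentInt_of_neg hk, Submodule.mem_bot] at hx
      simp [hx]
    rw [cliffordComponentInt_natCast, cliffordComponent_zero, Submodule.mem_one] at hx
    obtain ⟨r, rfl⟩ := hx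
    rw [← Algebra.smul_def]
    exact ⟨le_componentsGE (by simp) (Submodule.smul_mem _ r hy),
      le_componentsLE (by simp) (Submodule.smul_mem _ r hy)⟩
  | succ n ih =>
    intro k hk x hx
    rcases (show k ≤ n ∨ k = (n + 1 : ℕ) by omega) with hk | rfl
    · exact ih k hk x hx
    rw [cliffordComponentInt_natCast] at hx
    refine cliffordComponent_succ_le hρL (S := (componentsGE (cliffordComponentInt ρL) _ ⊓
      componentsLE (cliffordComponentInt ρL) _).comap (LinearMap.mulRight R y))
      (fun w b hb => ?_) hx
    obtain ⟨hbyGE, hbyLE⟩ := ih n le_rfl b hb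
    obtain ⟨hDbyGE, hDbyLE⟩ :=
      ih (n - 1) (by omega) _ (D_apply_mem_cliffordComponentInt hρL hL hD w hb)
    rw [Submodule.mem_comap, LinearMap.mulRight_apply, L_apply_mul hL hD]
    refine sub_mem (add_mem ⟨?_, ?_⟩ ⟨?_, ?_⟩) ⟨?_, ?_⟩
    · exact componentsGE_anti (by omega) (L_apply_mem_componentsGE hρL hbyGE)
    · exact componentsLE_mono (by omega) (L_apply_mem_componentsLE hρL hbyLE)
    · exact componentsGE_anti (by omega) (D_apply_mem_componentsGE hρL hL hD hbyGE)
    · exact componentsLE_mono (by omega) (D_apply_mem_componentsLE hρL hL hD hbyLE)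
    · exact componentsGE_anti (by omega) hDbyGE
    · exact componentsLE_mono (by omega) hDbyLE

variable {p : ℕ} {ξ : ExteriorAlgebra R V} {q : ℤ} {y : CliffordAlgebra Q}

include hρL hL hD in
theorem mul_sub_rhoL_apply_mem_componentsLE (hξ : ξ ∈ Λ¹ ^ p)
    (hy : y ∈ cliffordComponentInt ρL q) :
    ρL ξ 1 * y - ρL ξ y ∈ componentsLE (cliffordComponentInt ρL) (q + p - 1) := by
  induction hξ using Submodule.pow_induction_on_left' with
  | algebraMap r => simp
  | add ξ ξ' n _ _ h h' => simpa [add_mul, add_sub_add_comm] using add_mem h h'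
  | mem_mul _ hm n η hη ih =>
    obtain ⟨v, rfl⟩ := hm
    have hη1 := rhoL_apply_one_mem_cliffordComponentInt (ρL := ρL) hη
    have hηy := mul_mem_componentsGE_inf_componentsLE hρL hL hD hη1 hy
    have hDηy := mul_mem_componentsGE_inf_componentsLE hρL hL hD
      (D_apply_mem_cliffordComponentInt hρL hL hD v hη1) hy
    have hsplit : ρL (ExteriorAlgebra.ι R v * η) 1 * y - ρL (ExteriorAlgebra.ι R v * η) y =
        L v (ρL η 1 * y - ρL η y) + D v (ρL η 1 * y) - D v (ρL η 1) * y := by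
      simp only [map_mul, hρL, Module.End.mul_apply, L_apply_mul hL hD, map_sub]
      abel
    rw [hsplit]
    refine sub_mem (add_mem ?_ ?_) ?_
    · exact componentsLE_mono (by omega) (L_apply_mem_componentsLE hρL ih)
    · exact componentsLE_mono (by omega) (D_apply_mem_componentsLE hρL hL hD hηy.2)
    · exact componentsLE_mono (by omega) hDηy.2

include hρL hρD hL hD in
theorem mul_sub_rhoD_apply_mem_componentsGE (hξ : ξ ∈ Λ¹ ^ p)
    (hy : y ∈ cliffordComponentInt ρL q) :
    ρL ξ 1 * y - ρD ξ y ∈ componentsGE (cliffordComponentInt ρL) (q - p + 1) := by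
  induction hξ using Submodule.pow_induction_on_left' with
  | algebraMap r => simp
  | add ξ ξ' n _ _ h h' => simpa [add_mul, add_sub_add_comm] using add_mem h h'
  | mem_mul _ hm n η hη ih =>
    obtain ⟨v, rfl⟩ := hm
    have hη1 := rhoL_apply_one_mem_cliffordComponentInt (ρL := ρL) hη
    have hηy := mul_mem_componentsGE_inf_componentsLE hρL hL hD hη1 hy
    have hDηy := mul_mem_componentsGE_inf_componentsLE hρL hL hD
      (D_apply_mem_cliffordComponentInt hρL hL hD v hη1) hy
    have hsplit : ρL (ExteriorAlgebra.ι R v * η) 1 * y - ρD (ExteriorAlgebra.ι R v * η) y =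
        D v (ρL η 1 * y - ρD η y) + L v (ρL η 1 * y) - D v (ρL η 1) * y := by
      simp only [map_mul, hρL, hρD, Module.End.mul_apply, L_apply_mul hL hD, map_sub]
      abel
    rw [hsplit]
    refine sub_mem (add_mem ?_ ?_) ?_
    · exact componentsGE_anti (by omega) (D_apply_mem_componentsGE hρL hL hD ih)
    · exact componentsGE_anti (by omega) (L_apply_mem_componentsGE hρL hηy.1)
    · exact componentsGE_anti (by omega) hDηy.1

end Clifford

theorem clifford_product_projections_general
    {R : Type*} [CommRing R] [Invertible (2 : R)]
    {V : Type*} [AddCommGroup V] [Module R V]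
    (Q : QuadraticForm R V)
    (L D : V →ₗ[R] Module.End R (CliffordAlgebra Q))
    (hL : ∀ (v : V) (i : ZMod 2) (a : CliffordAlgebra Q), a ∈ evenOdd Q i →
      L v a = ⅟(2 : R) • (ι Q v * a + (-1 : CliffordAlgebra Q) ^ i.val * (a * ι Q v)))
    (hD : ∀ (v : V) (i : ZMod 2) (a : CliffordAlgebra Q), a ∈ evenOdd Q i →
      D v a = ⅟(2 : R) • (ι Q v * a - (-1 : CliffordAlgebra Q) ^ i.val * (a * ι Q v)))
    (ρL ρD : ExteriorAlgebra R V →ₐ[R] Module.End R (CliffordAlgebra Q))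
    (hρL : ∀ v : V, ρL (ExteriorAlgebra.ι R v) = L v)
    (hρD : ∀ v : V, ρD (ExteriorAlgebra.ι R v) = D v)
    -- the projections `Π^i : Cl(Q) → Cl^i(Q)` (with `Π^i = 0` for `i < 0`)
    (Pi : ℤ → Module.End R (CliffordAlgebra Q))
    (hPi : ∀ (i : ℤ) (j : ℕ) (a : CliffordAlgebra Q), a ∈ cliffordComponent ρL j →
      Pi i a = if i = (j : ℤ) then a else 0)
    (p q : ℕ) (ξ : ExteriorAlgebra R V)
    (hξ : ξ ∈ LinearMap.range (ExteriorAlgebra.ι R : V →ₗ[R] ExteriorAlgebra R V) ^ p)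
    (y : CliffordAlgebra Q) (hy : y ∈ cliffordComponent ρL q) :
    Pi ((p : ℤ) + q) (ρL ξ 1 * y) = ρL ξ y ∧
    Pi ((q : ℤ) - p) (ρL ξ 1 * y) = ρD ξ y := by
  have hPi' (i j : ℤ) (a : CliffordAlgebra Q) (ha : a ∈ cliffordComponentInt ρL j) :
      Pi i a = if i = j then a else 0 := by
    rcases lt_or_ge j 0 with hj | hj
    · rw [cliffordComponentInt_of_neg hj, Submodule.mem_bot] at ha
      simp [ha]
    lift j to ℕ using hj
    exact hPi i j a ha
  have hker (i j : ℤ) (hj : j ≠ i) : cliffordComponentInt ρL j ≤ LinearMap.ker (Pi i) :=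
    fun a ha => by simp [hPi' i j a ha, hj.symm]
  have hy' : y ∈ cliffordComponentInt ρL q := hy
  constructor
  · rw [← sub_add_cancel (ρL ξ 1 * y) (ρL ξ y), map_add,
      componentsLE_le (fun j hj => hker _ j (by omega))
        (mul_sub_rhoL_apply_mem_componentsLE hρL hL hD hξ hy'),
      hPi' _ _ _ (rhoL_apply_mem_cliffordComponentInt hξ hy'), if_pos (add_comm _ _), zero_add]
  · rw [← sub_add_cancel (ρL ξ 1 * y) (ρD ξ y), map_add,
      componentsGE_le (fun j hj => hker _ j (by omega))
        (mul_sub_rhoD_apply_mem_componentsGE hρL hρD hL hD hξ hy'),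
      hPi' _ _ _ (rhoD_apply_mem_cliffordComponentInt hρL hρD hL hD hξ hy'), if_pos rfl,
      zero_add]

/-- For `ξ ∈ Λ^p(V)` and `y ∈ Cl^q(Q)` one has
`Π^{p+q}(φ(ξ)·y) = L_ξ(y)` and `Π^{q−p}(φ(ξ)·y) = D_ξ(y)`. -/
theorem clifford_product_projections
    {R : Type*} [CommRing R] [Invertible (2 : R)]
    {V : Type*} [AddCommGroup V] [Module R V] [Module.Free R V] [Module.Finite R V]
    (Q : QuadraticForm R V)
    (L D : V →ₗ[R] Module.End R (CliffordAlgebra Q))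
    (hL : ∀ (v : V) (i : ZMod 2) (a : CliffordAlgebra Q), a ∈ evenOdd Q i →
      L v a = ⅟(2 : R) • (ι Q v * a + (-1 : CliffordAlgebra Q) ^ i.val * (a * ι Q v)))
    (hD : ∀ (v : V) (i : ZMod 2) (a : CliffordAlgebra Q), a ∈ evenOdd Q i →
      D v a = ⅟(2 : R) • (ι Q v * a - (-1 : CliffordAlgebra Q) ^ i.val * (a * ι Q v)))
    (ρL ρD : ExteriorAlgebra R V →ₐ[R] Module.End R (CliffordAlgebra Q))
    (hρL : ∀ v : V, ρL (ExteriorAlgebra.ι R v) = L v)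
    (hρD : ∀ v : V, ρD (ExteriorAlgebra.ι R v) = D v)
    -- the projections `Π^i : Cl(Q) → Cl^i(Q)` (with `Π^i = 0` for `i < 0`)
    (Pi : ℤ → Module.End R (CliffordAlgebra Q))
    (hPi : ∀ (i : ℤ) (j : ℕ) (a : CliffordAlgebra Q), a ∈ cliffordComponent ρL j →
      Pi i a = if i = (j : ℤ) then a else 0)
    (p q : ℕ) (ξ : ExteriorAlgebra R V)
    (hξ : ξ ∈ LinearMap.range (ExteriorAlgebra.ι R : V →ₗ[R] ExteriorAlgebra R V) ^ p)
    (y : CliffordAlgebra Q) (hy : y ∈ cliffordComponent ρL q) :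
    Pi ((p : ℤ) + q) (ρL ξ 1 * y) = ρL ξ y ∧
    Pi ((q : ℤ) - p) (ρL ξ 1 * y) = ρD ξ y :=
  clifford_product_projections_general Q L D hL hD ρL ρD hρL hρD Pi hPi p q ξ hξ y hy
end
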